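/- arXiv:2309.02042 — 2 statements merged into one kernel-verified Lean document; each statement's English description precedes it below -/
import Mathlib

section
/- Let g : ℝ → ℝ be an L-periodic Lipschitz continuous function with weak derivative g' ∈ L^∞(ℝ). Then the map p ↦ g(· - p), from ℝ to L²(0,L), is Fréchet differentiable at every p, with derivative h ↦ -h · g'(· - p). -/
/-!
After dividing by `h`, the integrand `((g (s - p - h) - g (s - p) + h g'(s - p)) / h)²` is bounded
by `(2C)²` (Lipschitz bound on the difference quotient, `|g'| ≤ C` on the other term) and tends to `0`
at every `s` where `g` is differentiable at `s - p`, which is almost every `s` since translations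
preserve null sets. Dominated convergence on the finite interval `(0, L]` then shows that the
`L²` norm of the remainder is `o(|h|)`.
-/

open MeasureTheory Filter Topology

theorem HasDerivAt.tendsto_sub_add_mul_div {g : ℝ → ℝ} {d x : ℝ} (hg : HasDerivAt g d x) :
    Tendsto (fun h => (g (x - h) - g x + h * d) / h) (𝓝[≠] 0) (𝓝 0) := by
  have hback : HasDerivAt (fun h => g (x - h)) (-d) 0 :=
    HasDerivAt.comp_const_sub x 0 (by simpa using hg)
  have hslope := hback.tendsto_slope_zero.add_const d
  rw [neg_add_cancel] at hslope
  refine hslope.congr' ?_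
  filter_upwards [self_mem_nhdsWithin] with h (hh : h ≠ 0)
  simp only [zero_add, sub_zero, smul_eq_mul]
  field_simp

theorem LipschitzWith.abs_sub_add_mul_le {g : ℝ → ℝ} {C : NNReal} (hg : LipschitzWith C g)
    {d : ℝ} (hd : |d| ≤ C) (x h : ℝ) :
    |g (x - h) - g x + h * d| ≤ 2 * C * |h| :=
  calc |g (x - h) - g x + h * d| ≤ |g (x - h) - g x| + |h| * |d| := by
        rw [← abs_mul]; exact abs_add_le _ _
    _ ≤ C * |h| + |h| * C := by
        have hlip : |g (x - h) - g x| ≤ C * |h| := by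
          simpa [Real.dist_eq] using hg.dist_le_mul (x - h) x
        gcongr
    _ = 2 * C * |h| := by ring

theorem tendsto_integral_sq_rpow_div_abs {α : Type*} [MeasurableSpace α] {μ : Measure α}
    [IsFiniteMeasure μ] {R : ℝ → α → ℝ} {K : ℝ}
    (hmeas : ∀ h, AEStronglyMeasurable (R h) μ)
    (hbound : ∀ h, ∀ᵐ s ∂μ, |R h s| ≤ K * |h|)
    (hlim : ∀ᵐ s ∂μ, Tendsto (fun h => R h s / h) (𝓝[≠] 0) (𝓝 0)) :
    Tendsto (fun h => (∫ s, R h s ^ 2 ∂μ) ^ ((1 : ℝ) / 2) / |h|) (𝓝[≠] 0) (𝓝 0) := by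
  have hint : Tendsto (fun h => ∫ s, (R h s / h) ^ 2 ∂μ) (𝓝[≠] 0) (𝓝 0) := by
    have := tendsto_integral_filter_of_dominated_convergence (μ := μ) (l := 𝓝[≠] (0 : ℝ))
      (F := fun h s => (R h s / h) ^ 2) (f := fun _ => 0) (fun _ => K ^ 2)
      (Eventually.of_forall fun h => ((hmeas h).mul_const h⁻¹).pow 2) ?_
      (integrable_const _) ?_
    · simpa using this
    · filter_upwards [self_mem_nhdsWithin] with h (hh : h ≠ 0)
      filter_upwards [hbound h] with s hs
      have hdiv : |R h s / h| ≤ K := by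
        rwa [abs_div, div_le_iff₀ (abs_pos.mpr hh)]
      rw [Real.norm_eq_abs, abs_pow]
      exact pow_le_pow_left₀ (abs_nonneg _) hdiv 2
    · filter_upwards [hlim] with s hs
      simpa using hs.pow 2
  have hsqrt := (Real.continuous_sqrt.tendsto 0).comp hint
  rw [Real.sqrt_zero] at hsqrt
  refine hsqrt.congr' ?_
  filter_upwards [self_mem_nhdsWithin] with h (hh : h ≠ 0)
  simp only [Function.comp_apply, div_pow, integral_div]
  rw [Real.sqrt_div (integral_nonneg fun s => sq_nonneg _), Real.sqrt_sq_eq_abs,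
    Real.sqrt_eq_rpow]

theorem stmt_0_general (L : ℝ) (g g' : ℝ → ℝ) (C : NNReal)
    (hlip : LipschitzWith C g)
    (hderiv : ∀ᵐ s : ℝ, HasDerivAt g (g' s) s)
    (hbd : ∀ᵐ s : ℝ, |g' s| ≤ C) (p : ℝ) :
    Tendsto
      (fun h : ℝ =>
        (∫ s in Set.Ioc (0 : ℝ) L,
            (g (s - (p + h)) - g (s - p) + h * g' (s - p)) ^ 2) ^ ((1 : ℝ) / 2) / |h|)
      (nhdsWithin 0 {0}ᶜ) (nhds 0) := by
  have hshift : Tendsto (fun s : ℝ => s - p) (ae volume) (ae volume) :=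
    (measurePreserving_sub_right volume p).quasiMeasurePreserving.tendsto_ae
  have hg'_meas : AEStronglyMeasurable (fun s => g' (s - p)) volume :=
    ((measurable_deriv g).comp (measurable_sub_const p)).aestronglyMeasurable.congr
      ((hshift.eventually hderiv).mono fun s hs => hs.deriv)
  have hcont (h : ℝ) : Continuous fun s => g (s - p - h) - g (s - p) := by
    have := hlip.continuous; fun_prop
  simp only [sub_add_eq_sub_sub]
  refine tendsto_integral_sq_rpow_div_abs (K := 2 * C)
    (fun h => (hcont h).aestronglyMeasurable.add (hg'_meas.const_mul h).restrict)
    (fun h => ae_restrict_of_ae ?_) (ae_restrict_of_ae ?_)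
  · filter_upwards [hshift.eventually hbd] with s hs
    exact hlip.abs_sub_add_mul_le hs _ _
  · filter_upwards [hshift.eventually hderiv] with s hs
    exact hs.tendsto_sub_add_mul_div

/-- Fréchet differentiability (in the o(|h|) sense in the L²(0,L) norm) of the
translation map `p ↦ g (· - p)` for an `L`-periodic Lipschitz function `g` whose
a.e. derivative `g'` is essentially bounded. -/
theorem stmt_0 (L : ℝ) (hL : 0 < L) (g g' : ℝ → ℝ) (C : NNReal)
    (hper : Function.Periodic g L) (hlip : LipschitzWith C g)
    (hderiv : ∀ᵐ s : ℝ, HasDerivAt g (g' s) s)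
    (hbd : ∀ᵐ s : ℝ, |g' s| ≤ C) (p : ℝ) :
    Tendsto
      (fun h : ℝ =>
        (∫ s in Set.Ioc (0 : ℝ) L,
            (g (s - (p + h)) - g (s - p) + h * g' (s - p)) ^ 2) ^ ((1 : ℝ) / 2) / |h|)
      (nhdsWithin 0 {0}ᶜ) (nhds 0) :=
  stmt_0_general L g g' C hlip hderiv hbd p
end

section
/- Let X be a real Hilbert space, P a normed space of parameters, and for each η in a normed space E let B_η be a bilinear form on X depending linearly and boundedly on η: |B_η(w,v)| ≤ C‖η‖‖w‖‖v‖. Let B_τ be bounded coercive with constant c. Suppose p ↦ u_p ∈ X is Fréchet differentiable at p with derivative h ↦ h u'_p. Define D(p) ∈ L(E, X) by B_τ(D(p)η, v) = -B_η(u_p, v) for all v. Then p ↦ D(p) is Fréchet differentiable from P to L(E,X) at p, with derivative h ↦ (η ↦ h D'(p)η) where D'(p)η solves B_τ(D'(p)η, v) = -B_η(u'_p, v) for all v. -/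
/-- Differentiability of the parameter-derivative operator with respect to the design
parameter: if `p ↦ u p` is Fréchet differentiable at `p` with derivative `u'`, the
operators `D q ∈ L(E, X)` solve `Bτ(D q η, v) = -B η (u q) v`, and `D' h η` solves
`Bτ(D' h η, v) = -B η (u' h) v`, then `q ↦ D q` is Fréchet differentiable at `p`
with derivative `D'`. -/
theorem stmt_13 {X E P : Type*} [NormedAddCommGroup X] [InnerProductSpace ℝ X]
    [CompleteSpace X] [NormedAddCommGroup E] [NormedSpace ℝ E]
    [NormedAddCommGroup P] [NormedSpace ℝ P]
    (Bτ : X →L[ℝ] X →L[ℝ] ℝ) (c : ℝ) (hc : 0 < c)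
    (hcoer : ∀ v : X, c * ‖v‖ ^ 2 ≤ Bτ v v)
    (B : E →ₗ[ℝ] X →ₗ[ℝ] X →ₗ[ℝ] ℝ) (C : ℝ)
    (hC : ∀ (η : E) (w v : X), |B η w v| ≤ C * ‖η‖ * ‖w‖ * ‖v‖)
    (u : P → X) (u' : P →L[ℝ] X) (p : P) (hu : HasFDerivAt u u' p)
    (D : P → E →L[ℝ] X)
    (hD : ∀ (q : P) (η : E) (v : X), Bτ (D q η) v = -(B η (u q) v))
    (D' : P →L[ℝ] E →L[ℝ] X)
    (hD' : ∀ (h : P) (η : E) (v : X), Bτ (D' h η) v = -(B η (u' h) v)) :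
    HasFDerivAt D D' p := by
  rw [hasFDerivAt_iff_isLittleO_nhds_zero] at hu ⊢
  set K : ℝ := max C 0 / c with hKdef
  have hK : 0 ≤ K := div_nonneg (le_max_right _ _) hc.le
  refine Asymptotics.IsBigO.trans_isLittleO (Asymptotics.IsBigO.of_bound K ?_) hu
  filter_upwards with h
  set g : X := u (p + h) - u p - u' h with hg
  have key : ∀ η : E, ‖(D (p + h) - D p - D' h) η‖ ≤ K * ‖g‖ * ‖η‖ := by
    intro η
    set w : X := (D (p + h) - D p - D' h) η with hw
    have hweq : w = D (p + h) η - D p η - D' h η := rfl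
    have h1 : Bτ w w = -(B η g w) := by
      have e1 : Bτ w w = Bτ (D (p + h) η) w - Bτ (D p η) w - Bτ (D' h η) w := by
        conv_lhs => rw [hweq]
        simp only [map_sub, ContinuousLinearMap.sub_apply]
        rw [hweq]
        simp only [map_sub]
        ring
      rw [e1, hD, hD, hD', hg]
      simp only [map_sub, LinearMap.sub_apply]
      ring
    have h2 : c * ‖w‖ ^ 2 ≤ max C 0 * ‖η‖ * ‖g‖ * ‖w‖ := by
      calc c * ‖w‖ ^ 2 ≤ Bτ w w := hcoer w
        _ = -(B η g w) := h1
        _ ≤ |B η g w| := neg_le_abs _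
        _ ≤ C * ‖η‖ * ‖g‖ * ‖w‖ := hC η g w
        _ ≤ max C 0 * ‖η‖ * ‖g‖ * ‖w‖ := by
            have := mul_nonneg (mul_nonneg (norm_nonneg η) (norm_nonneg g)) (norm_nonneg w)
            nlinarith [le_max_left C 0]
    have hwnn : 0 ≤ ‖w‖ := norm_nonneg w
    rcases eq_or_lt_of_le hwnn with h0 | h0
    · rw [← h0]
      positivity
    · have h3 : c * ‖w‖ ≤ max C 0 * ‖η‖ * ‖g‖ := by
        nlinarith
      rw [hKdef]
      rw [div_mul_eq_mul_div, div_mul_eq_mul_div, le_div_iff₀ hc]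
      nlinarith
  have hb : ‖D (p + h) - D p - D' h‖ ≤ K * ‖g‖ :=
    ContinuousLinearMap.opNorm_le_bound _ (by positivity) key
  simpa [mul_comm] using hb
end
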